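/- Let S be a right LCM monoid with a generalized scale N : S → ℕ^× (using properties: N^{-1}(1) = S_c, and for s,t ∈ S with rS = sS ∩ tS one has N_r N(S) = N_s N(S) ∩ N_t N(S)). Then the image N(S) is an LCM subsemigroup of ℕ^×: for all m, n ∈ N(S) there exists k ∈ N(S) with mN(S) ∩ nN(S) = kN(S). -/
import Mathlib


variable {S : Type*}

/-- The principal right ideal `sS` of a monoid. -/
def rIdeal [Monoid S] (s : S) : Set S := {x | ∃ r : S, x = s * r}

/-- A right LCM monoid: left cancellative, and any intersection of two principal
right ideals is empty or again a principal right ideal. -/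
def IsRightLCMMonoid (S : Type*) [Monoid S] : Prop :=
  (∀ a b c : S, a * b = a * c → b = c) ∧
  (∀ s t : S, rIdeal s ∩ rIdeal t = (∅ : Set S) ∨ ∃ r : S, rIdeal s ∩ rIdeal t = rIdeal r)

/-- The core of a right LCM monoid. -/
def core (S : Type*) [Monoid S] : Set S := {a | ∀ s : S, (rIdeal a ∩ rIdeal s).Nonempty}

/-- Core equivalence: `s ∼ t` iff `s * a = t * b` for some core elements `a, b`. -/
def coreEquiv [Monoid S] (s t : S) : Prop :=
  ∃ a ∈ core S, ∃ b ∈ core S, s * a = t * b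

/-- A generalized scale on a right LCM monoid. -/
def IsGenScale [Monoid S] (N : S →* ℕ+) : Prop :=
  (∃ s : S, N s ≠ 1) ∧
  (∀ n : ℕ+, (∃ s : S, N s = n) →
    Nat.card (Quot (fun x y : {s : S // N s = n} => coreEquiv x.1 y.1)) = (n : ℕ)) ∧
  (∀ s t : S, N s = N t → coreEquiv s t ∨ rIdeal s ∩ rIdeal t = (∅ : Set S)) ∧
  (∀ (s : S) (n : ℕ+), (∃ u : S, N u = n) →
    ∃ t : S, N t = n ∧ (rIdeal s ∩ rIdeal t).Nonempty)

/-- Irreducibility of an element of the image submonoid `N(S) ⊆ ℕ^×`. -/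
def IrrInScale [Monoid S] (N : S →* ℕ+) (n : ℕ+) : Prop :=
  n ≠ 1 ∧ ∀ k l : ℕ+, (∃ u : S, N u = k) → (∃ v : S, N v = l) → n = k * l → k = 1 ∨ l = 1

/-- The "ideal" `m · N(S)` inside `ℕ^×` for the image of a scale. -/
def scaleIdeal [Monoid S] (N : S →* ℕ+) (m : ℕ+) : Set ℕ+ := {x | ∃ s : S, x = m * N s}

theorem stmt10 [Monoid S] (hS : IsRightLCMMonoid S)
    (N : S →* ℕ+) (hN : IsGenScale N)
    (h1 : ∀ s : S, N s = 1 ↔ s ∈ core S)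
    (h2 : ∀ s t r : S, rIdeal s ∩ rIdeal t = rIdeal r →
      scaleIdeal N (N s) ∩ scaleIdeal N (N t) = scaleIdeal N (N r)) :
    ∀ m n : ℕ+, (∃ s : S, N s = m) → (∃ s : S, N s = n) →
      ∃ k : ℕ+, (∃ s : S, N s = k) ∧
        scaleIdeal N m ∩ scaleIdeal N n = scaleIdeal N k := by
  rintro m n ⟨s, rfl⟩ hn
  obtain ⟨t, hNt, hne⟩ := hN.2.2.2 s n hn
  rcases hS.2 s t with hemp | ⟨r, hr⟩
  · rw [hemp] at hne; exact absurd hne (by simp [Set.not_nonempty_empty])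
  · exact ⟨N r, ⟨r, rfl⟩, by rw [← hNt]; exact h2 s t r hr⟩
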